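/- arXiv:1605.02434 — 5 statements merged into one kernel-verified Lean document; each statement's English description precedes it below -/
import Mathlib

section
/- There is an absolute constant C > 0 with the following property. Let k ≥ 2 be an integer, t a real number, and set T := 1 + |t|. Then for every real x with x > eT/k and for each choice of sign ±, one has |I_±(t,k,x)| ≤ C · e^{−πT/2} · (x/T)^{1/2} · (eT/(xk))^{k}. -/
/-!
By reflection, `|Γ(1 - it)|² = πt / sinh(πt) ≤ 2π T e^{-π|t|}`, and the functional
equation gives `|Γ(k + j - it)| ≤ |Γ(1 - it)| (k+j-1)! T^{k+j-1}`. Since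
`(k+j-1)! k^k ≤ (2k+j-1)! = Γ(2k+j)`, the `j`-th term of the series is at most
`|Γ(1 - it)| T^{k-1} k^{-k} (T/x)^j / j!`, so the series is bounded by
`|Γ(1 - it)| T^{k-1} k^{-k} e^{T/x}`, and `x > eT/k` makes `e^{T/x} ≤ e^k`.
-/

open Complex

/-- `e(z) = exp(2πiz)`. -/
noncomputable def eC (z : ℂ) : ℂ := Complex.exp (2 * Real.pi * Complex.I * z)

/-- The function `I_ε(t,k,x)` for a sign `ε = ±1`:
`e(ε(1/2−k)/4) x^{1/2−k} Σ_j Γ(k+j−it)/(Γ(2k+j) j!) (−e(−ε/4)/x)^j`. -/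
noncomputable def Ipm (ε : ℝ) (t : ℝ) (k : ℕ) (x : ℝ) : ℂ :=
  eC ((ε : ℂ) * ((1 : ℂ) / 2 - (k : ℂ)) / 4) * (x : ℂ) ^ ((1 : ℂ) / 2 - (k : ℂ)) *
    ∑' j : ℕ, Complex.Gamma ((k : ℂ) + (j : ℂ) - (t : ℂ) * Complex.I) /
      (Complex.Gamma (2 * (k : ℂ) + (j : ℂ)) * (Nat.factorial j : ℂ)) *
      (-(eC (-(ε : ℂ) / 4)) / (x : ℂ)) ^ j

open ComplexConjugate
open scoped Nat

lemma norm_eC_ofReal (r : ℝ) : ‖eC r‖ = 1 := by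
  simp [eC, Complex.norm_exp]

lemma div_sinh_le_of_pos {s : ℝ} (hs : 0 < s) :
    s / Real.sinh s ≤ 2 * (1 + s) * Real.exp (-s) := by
  -- equivalently `(1 + s) e^{-2s} ≤ 1`
  have hsq : 1 + 2 * s ≤ Real.exp s * Real.exp s := by
    rw [← Real.exp_add, ← two_mul]; exact Real.add_one_le_exp _ |>.trans' (by linarith)
  have hinv : Real.exp s * Real.exp (-s) = 1 := by
    rw [← Real.exp_add, add_neg_cancel, Real.exp_zero]
  rw [div_le_iff₀ (Real.sinh_pos_iff.2 hs), Real.sinh_eq]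
  nlinarith [Real.exp_pos (-s), mul_pos (Real.exp_pos (-s)) (Real.exp_pos (-s))]

lemma div_sinh_le {s : ℝ} (hs : s ≠ 0) :
    s / Real.sinh s ≤ 2 * (1 + |s|) * Real.exp (-|s|) := by
  rcases hs.lt_or_gt with h | h
  · simpa [abs_of_neg h, neg_div_neg_eq] using div_sinh_le_of_pos (neg_pos.2 h)
  · simpa [abs_of_pos h] using div_sinh_le_of_pos h

lemma normSq_Gamma_one_sub_mul_I {t : ℝ} (ht : t ≠ 0) :
    normSq (Gamma (1 - t * I)) = Real.pi * t / Real.sinh (Real.pi * t) := by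
  have hconj : Gamma (1 + t * I) = conj (Gamma (1 - t * I)) := by
    rw [← Gamma_conj]; simp
  have hrec : Gamma (1 + t * I) = t * I * Gamma (t * I) := by
    rw [add_comm, Gamma_add_one _ (by simp [ht])]
  have hsin : sin (Real.pi * (t * I)) = Real.sinh (Real.pi * t) * I := by
    rw [← mul_assoc, ← ofReal_mul, sin_mul_I, ofReal_sinh]
  have hsinh : (Real.sinh (Real.pi * t) : ℂ) ≠ 0 := by
    exact_mod_cast Real.sinh_ne_zero.2 (mul_ne_zero Real.pi_ne_zero ht)
  apply ofReal_injective
  rw [← mul_conj, ← hconj, hrec, mul_left_comm, mul_comm (Gamma (1 - _)),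
    Gamma_mul_Gamma_one_sub, hsin]
  push_cast
  field_simp

lemma normSq_Gamma_one_sub_mul_I_le (t : ℝ) :
    normSq (Gamma (1 - t * I)) ≤ 2 * Real.pi * (1 + |t|) * Real.exp (-(Real.pi * |t|)) := by
  rcases eq_or_ne t 0 with rfl | ht
  · simpa using (by linarith [Real.pi_gt_three] : (1 : ℝ) ≤ 2 * Real.pi)
  rw [normSq_Gamma_one_sub_mul_I ht]
  refine (div_sinh_le (mul_ne_zero Real.pi_ne_zero ht)).trans ?_
  rw [abs_mul, abs_of_pos Real.pi_pos]
  refine mul_le_mul_of_nonneg_right ?_ (Real.exp_pos _).le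
  nlinarith [Real.pi_gt_three, abs_nonneg t]

lemma norm_Gamma_one_sub_mul_I_le (t : ℝ) :
    ‖Gamma (1 - t * I)‖ ≤
      √(2 * Real.pi) * Real.exp (Real.pi / 2) * √(1 + |t|) *
        Real.exp (-Real.pi * (1 + |t|) / 2) := by
  have hexp : Real.exp (-(Real.pi * |t|) / 2) =
      Real.exp (Real.pi / 2) * Real.exp (-Real.pi * (1 + |t|) / 2) := by
    rw [← Real.exp_add]; ring_nf
  calc ‖Gamma (1 - t * I)‖
        ≤ √(2 * Real.pi * (1 + |t|)) * Real.exp (-(Real.pi * |t|) / 2) := by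
        rw [norm_def, Real.exp_half, ← Real.sqrt_mul (by positivity)]
        exact Real.sqrt_le_sqrt (normSq_Gamma_one_sub_mul_I_le t)
    _ = _ := by rw [Real.sqrt_mul (by positivity), hexp]; ring

lemma norm_Gamma_one_add_add_nat_le {w : ℂ} (hw : 0 ≤ w.re) (n : ℕ) :
    ‖Gamma (1 + w + n)‖ ≤ ‖Gamma (1 + w)‖ * n ! * (1 + ‖w‖) ^ n := by
  induction n with
  | zero => simp
  | succ n ih =>
    have hne : 1 + w + n ≠ 0 := fun h => by
      have := congrArg re h
      simp only [add_re, one_re, natCast_re, zero_re] at this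
      linarith [n.cast_nonneg (α := ℝ)]
    have hnorm : ‖1 + w + n‖ ≤ (n + 1) * (1 + ‖w‖) := by
      calc ‖1 + w + n‖ = ‖((n + 1 : ℕ) : ℂ) + w‖ := by push_cast; ring_nf
        _ ≤ (n + 1) + ‖w‖ := by
          refine (norm_add_le _ _).trans ?_; rw [norm_natCast]; push_cast; rfl
        _ ≤ (n + 1) * (1 + ‖w‖) := by nlinarith [norm_nonneg w, n.cast_nonneg (α := ℝ)]
    rw [Nat.cast_succ, ← add_assoc, Gamma_add_one _ hne, norm_mul, Nat.factorial_succ]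
    calc ‖1 + w + n‖ * ‖Gamma (1 + w + n)‖
        ≤ ((n + 1) * (1 + ‖w‖)) * (‖Gamma (1 + w)‖ * n ! * (1 + ‖w‖) ^ n) := by gcongr
      _ = _ := by push_cast; ring

lemma factorial_mul_pow_le_factorial_add {n k : ℕ} (hk : k ≤ n + 1) :
    n ! * k ^ k ≤ (n + k)! :=
  (Nat.mul_le_mul_left _ (Nat.pow_le_pow_left hk k)).trans Nat.factorial_mul_pow_le_factorial

lemma norm_Gamma_div_Gamma_mul_factorial_le (t : ℝ) {k : ℕ} (hk : 1 ≤ k) (j : ℕ) :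
    ‖Gamma (k + j - t * I) / (Gamma (2 * k + j) * j !)‖ ≤
      ‖Gamma (1 - t * I)‖ * (1 + |t|) ^ (k - 1) / k ^ k * ((1 + |t|) ^ j / j !) := by
  obtain ⟨n, hn⟩ : ∃ n, k + j = n + 1 := ⟨k + j - 1, by omega⟩
  have hnC : (k + j : ℂ) = n + 1 := by exact_mod_cast hn
  have hnum : (k + j - t * I : ℂ) = 1 + -(t * I) + n := by linear_combination hnC
  have hden : Gamma (2 * k + j) = (n + k)! := by
    rw [← Gamma_nat_eq_factorial]; push_cast; congr 1; linear_combination hnC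
  have hw : ‖-(t * I : ℂ)‖ = |t| := by simp
  have hpow : (1 + |t|) ^ n = (1 + |t|) ^ (k - 1) * (1 + |t|) ^ j := by
    rw [← pow_add]; congr 1; omega
  have hfact : (n ! * k ^ k : ℝ) ≤ (n + k)! := by
    exact_mod_cast factorial_mul_pow_le_factorial_add (by omega : k ≤ n + 1)
  have hGamma := norm_Gamma_one_add_add_nat_le (w := -(t * I)) (by simp) n
  rw [hw, ← sub_eq_add_neg] at hGamma
  rw [hnum, hden, norm_div, norm_mul, Complex.norm_natCast, Complex.norm_natCast,
    ← sub_eq_add_neg]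
  calc ‖Gamma (1 - t * I + n)‖ / ((n + k)! * j !)
      ≤ ‖Gamma (1 - t * I)‖ * n ! * (1 + |t|) ^ n / ((n + k)! * j !) := by gcongr
    _ ≤ ‖Gamma (1 - t * I)‖ * n ! * (1 + |t|) ^ n / ((n ! * k ^ k) * j !) := by gcongr
    _ = _ := by rw [hpow]; field_simp

lemma norm_tsum_mul_pow_le {a : ℕ → ℂ} {A r : ℝ} (ha : ∀ j, ‖a j‖ ≤ A * (r ^ j / j !))
    (z : ℂ) :
    ‖∑' j, a j * z ^ j‖ ≤ A * Real.exp (r * ‖z‖) := by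
  have hexp : HasSum (fun j : ℕ => (r * ‖z‖) ^ j / j !) (Real.exp (r * ‖z‖)) := by
    rw [Real.exp_eq_exp_ℝ]; exact NormedSpace.expSeries_div_hasSum_exp _
  refine tsum_of_norm_bounded (hexp.mul_left A) fun j => ?_
  rw [norm_mul, norm_pow, mul_pow, mul_div_right_comm, ← mul_assoc]
  exact mul_le_mul_of_nonneg_right (ha j) (by positivity)

lemma norm_Ipm_le (ε t : ℝ) {k : ℕ} (hk : 1 ≤ k) {x : ℝ} (hx : 0 < x) :
    ‖Ipm ε t k x‖ ≤ √x / x ^ k * (‖Gamma (1 - t * I)‖ * (1 + |t|) ^ (k - 1) / k ^ k) *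
      Real.exp ((1 + |t|) / x) := by
  have hphase : ‖eC ((ε : ℂ) * (1 / 2 - k) / 4)‖ = 1 := by
    rw [show (ε : ℂ) * (1 / 2 - k) / 4 = ((ε * (1 / 2 - k) / 4 : ℝ) : ℂ) by push_cast; ring,
      norm_eC_ofReal]
  have hpow : ‖(x : ℂ) ^ ((1 : ℂ) / 2 - k)‖ = √x / x ^ k := by
    rw [norm_cpow_eq_rpow_re_of_pos hx]
    simp [Real.rpow_sub hx, Real.sqrt_eq_rpow]
  have hratio : ‖-(eC (-(ε : ℂ) / 4)) / (x : ℂ)‖ = x⁻¹ := by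
    rw [norm_div, norm_neg, show -(ε : ℂ) / 4 = ((-ε / 4 : ℝ) : ℂ) by push_cast; ring,
      norm_eC_ofReal, norm_real, Real.norm_of_nonneg hx.le, one_div]
  rw [Ipm, norm_mul, norm_mul, hphase, hpow, one_mul, mul_assoc, div_eq_mul_inv (1 + |t|),
    ← hratio]
  gcongr
  exact norm_tsum_mul_pow_le (norm_Gamma_div_Gamma_mul_factorial_le t hk) _

theorem stmt0 :
    ∃ C > (0 : ℝ), ∀ (k : ℕ), 2 ≤ k → ∀ (t : ℝ), ∀ (x : ℝ),
      Real.exp 1 * (1 + |t|) / k < x → ∀ ε : ℝ, ε = 1 ∨ ε = -1 →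
      ‖Ipm ε t k x‖ ≤ C * Real.exp (-Real.pi * (1 + |t|) / 2) *
        Real.sqrt (x / (1 + |t|)) * (Real.exp 1 * (1 + |t|) / (x * k)) ^ k := by
  refine ⟨√(2 * Real.pi) * Real.exp (Real.pi / 2), by positivity, ?_⟩
  intro k hk t x hx ε _
  obtain ⟨m, rfl⟩ : ∃ m, k = m + 1 := ⟨k - 1, by omega⟩
  have hx0 : 0 < x := lt_of_le_of_lt (by positivity) hx
  have hexp : Real.exp ((1 + |t|) / x) ≤ Real.exp 1 ^ (m + 1) := by
    rw [← Real.exp_nat_mul, mul_one, Real.exp_le_exp, div_le_iff₀ hx0]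
    rw [div_lt_iff₀ (by positivity)] at hx
    nlinarith [Real.add_one_le_exp 1, abs_nonneg t]
  have hIpm := norm_Ipm_le ε t (Nat.le_add_left 1 m) hx0
  rw [Nat.add_sub_cancel] at hIpm
  obtain ⟨s, hs0, hs⟩ : ∃ s, 0 < s ∧ 1 + |t| = s ^ 2 :=
    ⟨√(1 + |t|), by positivity, (Real.sq_sqrt (by positivity)).symm⟩
  calc ‖Ipm ε t (m + 1) x‖
      ≤ √x / x ^ (m + 1) * (√(2 * Real.pi) * Real.exp (Real.pi / 2) * √(1 + |t|) *
          Real.exp (-Real.pi * (1 + |t|) / 2) * (1 + |t|) ^ m / ((m + 1 : ℕ) : ℝ) ^ (m + 1)) *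
          Real.exp 1 ^ (m + 1) := by
        refine hIpm.trans ?_
        gcongr
        exact norm_Gamma_one_sub_mul_I_le t
    _ = _ := by
        rw [hs, Real.sqrt_div hx0.le, Real.sqrt_sq hs0.le, div_pow, mul_pow, mul_pow]
        field_simp
        ring
end

section
/- Let q ≥ 1 be an integer and l an integer, and define G : ℂ → ℂ by G(s) := Σ_{(a,b)} e(a·l/q) · expZeta(b/q, s), the sum running over all pairs (a,b) with 1 ≤ a,b ≤ q and a·b ≡ 1 (mod q), where b/q is taken in ℝ/ℤ. Then for every z ∈ ℂ with Re z < 0 one has G(z) = Γ(1−z) · (2π/q)^{z−1} · [ e((1−z)/4) · Σ_{n ≥ 1, gcd(n,q)=1} e(l·n̄/q) · n^{z−1} + e(−(1−z)/4) · Σ_{n ≥ 1, gcd(n,q)=1} e(−l·n̄/q) · n^{z−1} ], where for each n coprime to q, n̄ ∈ {1,…,q} denotes the inverse of n modulo q; both series on the right converge absolutely. -/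
open Complex

/-- The Kloosterman sum `Kl(m,n;c) = Σ_{x mod c, (x,c)=1} e((mx + nx*)/c)`,
where `x*` is the inverse of `x` modulo `c`. -/
noncomputable def Kl (m n : ℤ) (c : ℕ) : ℂ :=
  ∑ x ∈ Finset.filter (fun x => Nat.gcd x c = 1) (Finset.Icc 1 c),
    eC ((((m * x + n * ((((x : ZMod c))⁻¹.val : ℕ) : ℤ) : ℤ) : ℝ) / c : ℝ))

/-- `G(s) = Σ_{1 ≤ a,b ≤ q, ab ≡ 1 (q)} e(al/q) expZeta(b/q, s)`. -/
noncomputable def G (q : ℕ) (l : ℤ) (s : ℂ) : ℂ :=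
  ∑ a ∈ Finset.Icc 1 q, ∑ b ∈ Finset.Icc 1 q,
    if (a * b) % q = 1 % q then
      eC ((((a : ℤ) * l : ℤ) : ℝ) / q) *
        HurwitzZeta.expZeta (((b : ℝ) / q : ℝ) : UnitAddCircle) s
    else 0

/-!
Each term of `G` is `expZeta (b / q) z` with `b` a unit mod `q`, weighted by `e(l b⁻¹ / q)`.
Hurwitz's functional equation expresses `expZeta (b / q) z` by `hurwitzZeta (± b / q) (1 - z)`,
where `Re (1 - z) > 1`. Summed over the residues `b` against a function `Φ` on `ZMod q`, these
Hurwitz zeta values assemble into the Dirichlet series of the `q`-periodic functions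
`n ↦ Φ (± n)`, which for `Φ b = e(l b⁻¹ / q) · 1_{b unit}` are the two series on the right.
-/

open Finset ZMod HurwitzZeta

namespace ZMod

variable {q : ℕ} [NeZero q]

lemma sum_Icc_one_natCast {M : Type*} [AddCommMonoid M] (f : ZMod q → M) :
    ∑ b ∈ Icc 1 q, f b = ∑ j, f j := by
  have hq := NeZero.pos q
  refine sum_nbij' (fun b => (b : ZMod q)) (fun j => if j = 0 then q else j.val)
    (fun _ _ => mem_univ _) (fun j _ => ?_) (fun b hb => ?_) (fun j _ => ?_) (fun _ _ => rfl)
  · have := j.val_lt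
    rw [mem_Icc]
    split_ifs with h
    · omega
    · have := (val_ne_zero j).mpr h
      omega
  · rw [mem_Icc] at hb
    rcases hb.2.lt_or_eq with h | rfl
    · have hval : (b : ZMod q).val = b := by rw [val_natCast, Nat.mod_eq_of_lt h]
      rw [if_neg fun h0 => by rw [h0, val_zero] at hval; omega, hval]
    · simp
  · split_ifs with h
    · simp [h]
    · exact natCast_zmod_val j

lemma sum_ite_mul_eq_one {M : Type*} [AddCommMonoid M] (f : ZMod q → M) (b : ZMod q) :
    ∑ a, (if a * b = 1 then f a else 0) = if IsUnit b then f b⁻¹ else 0 := by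
  by_cases hb : IsUnit b
  · have hiff (a : ZMod q) : a * b = 1 ↔ b⁻¹ = a :=
      ⟨fun h => ZMod.inv_eq_of_mul_eq_one _ _ _ (by rw [mul_comm, h]),
       fun h => h ▸ inv_mul_of_unit b hb⟩
    simp only [hiff, sum_ite_eq, mem_univ, if_true, hb]
  · refine (sum_eq_zero fun a _ => if_neg fun h => hb (IsUnit.of_mul_eq_one_right _ h)).trans ?_
    rw [if_neg hb]

end ZMod

lemma eC_intCast_div (q : ℕ) [NeZero q] (k : ℤ) :
    eC (((k : ℝ) : ℂ) / q) = stdAddChar (k : ZMod q) := by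
  rw [eC, stdAddChar_coe, ofReal_intCast, mul_div_assoc]

noncomputable def invPhase (q : ℕ) [NeZero q] (l : ℤ) (j : ZMod q) : ℂ :=
  if IsUnit j then stdAddChar ((l : ZMod q) * j⁻¹) else 0

lemma invPhase_neg {q : ℕ} [NeZero q] (l : ℤ) (j : ZMod q) :
    invPhase q l (-j) = invPhase q (-l) j := by
  unfold invPhase
  by_cases hj : IsUnit j
  · have hinv : (-j)⁻¹ = -j⁻¹ :=
      ZMod.inv_eq_of_mul_eq_one _ _ _ (by rw [neg_mul_neg, mul_inv_of_unit j hj])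
    rw [if_pos ((IsUnit.neg_iff j).mpr hj), if_pos hj, hinv, Int.cast_neg, mul_neg, neg_mul]
  · rw [if_neg (mt (IsUnit.neg_iff j).mp hj), if_neg hj]

lemma LSeries_term_invPhase (q : ℕ) [NeZero q] (l : ℤ) (z : ℂ) (n : ℕ) :
    LSeries.term (fun n => invPhase q l n) (1 - z) n =
      if 1 ≤ n ∧ Nat.gcd n q = 1 then
        eC (((l * ((((n : ZMod q))⁻¹.val : ℕ) : ℤ) : ℤ) : ℝ) / q) * (n : ℂ) ^ (z - 1)
      else 0 := by
  rcases Nat.eq_zero_or_pos n with rfl | hn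
  · simp
  have hunit : (1 ≤ n ∧ n.gcd q = 1) ↔ IsUnit (n : ZMod q) := by
    rw [ZMod.isUnit_iff_coprime, Nat.coprime_iff_gcd_eq_one, and_iff_right (show 1 ≤ n from hn)]
  rw [LSeries.term_of_ne_zero hn.ne', invPhase]
  simp only [hunit]
  split_ifs
  · rw [eC_intCast_div, div_eq_mul_inv, ← cpow_neg, neg_sub]
    push_cast [natCast_zmod_val]
    rfl
  · exact zero_div _

lemma G_eq_sum_invPhase_mul_expZeta (q : ℕ) [NeZero q] (l : ℤ) (s : ℂ) :
    G q l s = ∑ j : ZMod q, invPhase q l j * expZeta (toAddCircle j) s := by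
  set F : ZMod q → ZMod q → ℂ := fun x y =>
    if x * y = 1 then stdAddChar (x * (l : ZMod q)) * expZeta (toAddCircle y) s else 0
  have hsummand (a b : ℕ) :
      (if (a * b) % q = 1 % q then
        eC ((((a : ℤ) * l : ℤ) : ℝ) / q) * expZeta (((b : ℝ) / q : ℝ) : UnitAddCircle) s
      else 0) = F a b := by
    have hcond : (a * b) % q = 1 % q ↔ (a : ZMod q) * b = 1 := by
      rw [← ZMod.natCast_eq_natCast_iff', Nat.cast_mul, Nat.cast_one]
    simp only [F, hcond, eC_intCast_div, toAddCircle_natCast]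
    push_cast
    rfl
  have hinner (x : ZMod q) : ∑ b ∈ Icc 1 q, F x b = ∑ y, F x y := sum_Icc_one_natCast (F x)
  simp only [G, hsummand, hinner]
  rw [sum_Icc_one_natCast (fun x => ∑ y, F x y), sum_comm]
  refine sum_congr rfl fun j _ => ?_
  rw [sum_ite_mul_eq_one (fun a => stdAddChar (a * (l : ZMod q)) * expZeta (toAddCircle j) s),
    invPhase, ite_mul, zero_mul, mul_comm (j⁻¹)]

lemma sum_mul_expZeta_eq_LFunction {q : ℕ} [NeZero q] (Φ : ZMod q → ℂ) {z : ℂ}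
    (hz : ∀ n : ℕ, z ≠ n) :
    ∑ j, Φ j * expZeta (toAddCircle j) z =
      Gamma (1 - z) * (((2 * Real.pi / q : ℝ) : ℂ)) ^ (z - 1) *
        (eC ((1 - z) / 4) * LFunction Φ (1 - z) +
          eC (-(1 - z) / 4) * LFunction (fun j => Φ (-j)) (1 - z)) := by
  set s := 1 - z
  have hs (n : ℕ) : s ≠ 1 - n := fun h => hz n (sub_right_injective h)
  have hexp (j : ZMod q) : expZeta (toAddCircle j) z = (2 * Real.pi) ^ (z - 1) * Gamma s *
      (eC (s / 4) * hurwitzZeta (toAddCircle j) s +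
        eC (-s / 4) * hurwitzZeta (-toAddCircle j) s) := by
    have h := expZeta_one_sub (toAddCircle j) hs
    rw [sub_sub_cancel, neg_sub] at h
    rw [h, eC, eC]
    congr 4 <;> ring
  have hsum_neg : ∑ j, Φ j * hurwitzZeta (-toAddCircle j) s =
      ∑ j, Φ (-j) * hurwitzZeta (toAddCircle j) s :=
    Fintype.sum_equiv (Equiv.neg _) _ _ fun j => by simp
  have hbase :
      (((2 * Real.pi / q : ℝ) : ℂ)) ^ (z - 1) = (2 * Real.pi) ^ (z - 1) * (q : ℂ) ^ s := by
    rw [ofReal_div, div_cpow_ofReal_nonneg (by positivity) (by positivity), div_eq_mul_inv,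
      ← cpow_neg, neg_sub]
    push_cast
    rfl
  have hq : (q : ℂ) ^ s * (q : ℂ) ^ (-s) = 1 := by
    rw [← cpow_add _ _ (Nat.cast_ne_zero.mpr (NeZero.ne q)), add_neg_cancel, cpow_zero]
  set A := ∑ j, Φ j * hurwitzZeta (toAddCircle j) s
  set B := ∑ j, Φ (-j) * hurwitzZeta (toAddCircle j) s
  set C := (2 * Real.pi : ℂ) ^ (z - 1) * Gamma s
  calc ∑ j, Φ j * expZeta (toAddCircle j) z
      = ∑ j, C * (eC (s / 4) * (Φ j * hurwitzZeta (toAddCircle j) s)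
          + eC (-s / 4) * (Φ j * hurwitzZeta (-toAddCircle j) s)) :=
        sum_congr rfl fun j _ => by rw [hexp]; ring
    _ = C * (eC (s / 4) * A + eC (-s / 4) * B) := by
        rw [← mul_sum, sum_add_distrib, ← mul_sum, ← mul_sum, hsum_neg]
    _ = _ := by
        rw [LFunction, LFunction, hbase]
        linear_combination (-C * (eC (s / 4) * A + eC (-s / 4) * B)) * hq

theorem stmt4 (q : ℕ) (hq : 1 ≤ q) (l : ℤ) (z : ℂ) (hz : z.re < 0) :
    Summable (fun n : ℕ => ‖(if 1 ≤ n ∧ Nat.gcd n q = 1 then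
        eC (((l * ((((n : ZMod q))⁻¹.val : ℕ) : ℤ) : ℤ) : ℝ) / q) * (n : ℂ) ^ (z - 1)
      else 0)‖) ∧
    Summable (fun n : ℕ => ‖(if 1 ≤ n ∧ Nat.gcd n q = 1 then
        eC (((-(l * ((((n : ZMod q))⁻¹.val : ℕ) : ℤ)) : ℤ) : ℝ) / q) * (n : ℂ) ^ (z - 1)
      else 0)‖) ∧
    G q l z = Complex.Gamma (1 - z) * (((2 * Real.pi / q : ℝ) : ℂ)) ^ (z - 1) *
      (eC ((1 - z) / 4) *
          ∑' n : ℕ, (if 1 ≤ n ∧ Nat.gcd n q = 1 then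
            eC (((l * ((((n : ZMod q))⁻¹.val : ℕ) : ℤ) : ℤ) : ℝ) / q) * (n : ℂ) ^ (z - 1)
          else 0) +
        eC (-(1 - z) / 4) *
          ∑' n : ℕ, (if 1 ≤ n ∧ Nat.gcd n q = 1 then
            eC (((-(l * ((((n : ZMod q))⁻¹.val : ℕ) : ℤ)) : ℤ) : ℝ) / q) * (n : ℂ) ^ (z - 1)
          else 0)) := by
  have : NeZero q := ⟨by omega⟩
  have hs : 1 < (1 - z).re := by rw [sub_re, one_re]; linarith
  have hz_nat (n : ℕ) : z ≠ n := fun h => by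
    rw [h, natCast_re] at hz
    exact (Nat.cast_nonneg n).not_gt hz
  simp only [← neg_mul, ← LSeries_term_invPhase, summable_norm_iff]
  refine ⟨LSeriesSummable_of_one_lt_re _ hs, LSeriesSummable_of_one_lt_re _ hs, ?_⟩
  rw [G_eq_sum_invPhase_mul_expZeta, sum_mul_expZeta_eq_LFunction _ hz_nat,
    LFunction_eq_LSeries _ hs, LFunction_eq_LSeries _ hs]
  simp only [invPhase_neg, LSeries]
end

section
/- Let p be a prime, q a positive integer divisible by p, l an integer with gcd(l,p) = 1, and n any integer. Then | Σ_{b} e(l·b̄/q) | ≤ 1, where the sum runs over all b ∈ {1,…,q} with gcd(b,q) = 1 and b ≡ n (mod q/p), and b̄ ∈ {1,…,q} is the inverse of b modulo q. -/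
open Complex

/-!
Write `q = p r`. Inversion permutes the units of `ℤ/q` and maps the units over `n` in `ℤ/r`
to the units over `n⁻¹`, so the sum is `Σ ψ(l y)` over the units `y` of the fibre of
`ℤ/q → ℤ/r` above `μ = n⁻¹`, with `ψ` the standard additive character. The full fibre is
stable under `y ↦ y + r` and `ψ(l r) = e(l/p) ≠ 1`, so `ψ(l ·)` sums to zero over it. A non-unit
of the fibre is divisible by `p`, and by the Chinese remainder theorem there is at most one such
element. Hence the sum is minus at most one root of unity.
-/

open Finset

theorem eC_intCast_mul_val_div_eq_stdAddChar {N : ℕ} [NeZero N] (l : ℤ) (x : ZMod N) :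
    eC (((l * (x.val : ℤ) : ℤ) : ℝ) / (N : ℂ)) = ZMod.stdAddChar ((l : ZMod N) * x) := by
  have hcast : ((l * (x.val : ℤ) : ℤ) : ZMod N) = l * x := by simp
  rw [← hcast, ZMod.stdAddChar_apply, ZMod.toCircle_intCast, eC]
  push_cast
  ring_nf

theorem AddChar.sum_filter_eq_zero_of_periodic {G H R : Type*} [AddGroup G] [Fintype G]
    [DecidableEq H] [CommRing R] [IsDomain R] (ψ : AddChar G R) (f : G → H) {a : G}
    (hf : ∀ y, f (y + a) = f y) (hψ : ψ a ≠ 1) (μ : H) :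
    ∑ y with f y = μ, ψ y = 0 := by
  set S := ∑ y with f y = μ, ψ y
  have hshift : ψ a * S = S := by
    rw [mul_sum]
    exact sum_equiv (Equiv.addRight a) (by simp [hf])
      (fun y _ => by simp [AddChar.map_add_eq_mul, mul_comm])
  have : (ψ a - 1) * S = 0 := by rw [sub_mul, hshift, one_mul, sub_self]
  exact (mul_eq_zero.1 this).resolve_left (sub_ne_zero.2 hψ)

theorem norm_sum_filter_le_one_of_sum_eq_zero {ι E : Type*} [SeminormedAddCommGroup E]
    {s : Finset ι} {P : ι → Prop} [DecidablePred P] {f : ι → E} (h0 : ∑ x ∈ s, f x = 0)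
    (hf : ∀ x ∈ s, ‖f x‖ ≤ 1) (hcard : #{x ∈ s | ¬P x} ≤ 1) :
    ‖∑ x ∈ s with P x, f x‖ ≤ 1 := by
  have hneg : ∑ x ∈ s with P x, f x = -∑ x ∈ s with ¬P x, f x :=
    eq_neg_of_add_eq_zero_left ((sum_filter_add_sum_filter_not s P f).trans h0)
  rw [hneg, norm_neg]
  calc ‖∑ x ∈ s with ¬P x, f x‖ ≤ ∑ x ∈ s with ¬P x, (1 : ℝ) :=
        norm_sum_le_of_le _ fun x hx => hf x (mem_filter.1 hx).1
    _ = #{x ∈ s | ¬P x} := by simp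
    _ ≤ 1 := by exact_mod_cast hcard

namespace ZMod

theorem isUnit_inv_of_isUnit {n : ℕ} {a : ZMod n} (ha : IsUnit a) : IsUnit a⁻¹ :=
  IsUnit.of_mul_eq_one a (inv_mul_of_unit a ha)

theorem inv_inv_of_isUnit {n : ℕ} {a : ZMod n} (ha : IsUnit a) : a⁻¹⁻¹ = a :=
  ZMod.inv_eq_of_mul_eq_one n _ _ (inv_mul_of_unit a ha)

theorem cast_inv_of_isUnit {m n : ℕ} (h : m ∣ n) {a : ZMod n} (ha : IsUnit a) :
    (cast a⁻¹ : ZMod m) = (cast a)⁻¹ := by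
  refine (ZMod.inv_eq_of_mul_eq_one m _ _ ?_).symm
  rw [← cast_mul h, mul_inv_of_unit a ha, cast_one h]

theorem sum_filter_isUnit_inv {M : Type*} [AddCommMonoid M] {n : ℕ} [NeZero n]
    (P : ZMod n → Prop) [DecidablePred P] (g : ZMod n → M) :
    ∑ x with P x ∧ IsUnit x, g x⁻¹ = ∑ y with P y⁻¹ ∧ IsUnit y, g y := by
  refine sum_nbij' (· ⁻¹) (· ⁻¹) ?_ ?_ ?_ ?_ (fun _ _ => rfl)
  · intro x hx
    simp only [mem_filter_univ] at hx ⊢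
    exact ⟨by rw [inv_inv_of_isUnit hx.2]; exact hx.1, isUnit_inv_of_isUnit hx.2⟩
  · intro y hy
    simp only [mem_filter_univ] at hy ⊢
    exact ⟨hy.1, isUnit_inv_of_isUnit hy.2⟩
  · intro x hx
    exact inv_inv_of_isUnit ((mem_filter_univ x).1 hx).2
  · intro y hy
    exact inv_inv_of_isUnit ((mem_filter_univ y).1 hy).2

theorem sum_Icc_coprime_eq_sum_isUnit {M : Type*} [AddCommMonoid M] {n : ℕ} [NeZero n]
    (hn : n ≠ 1) (P : ZMod n → Prop) [DecidablePred P] (g : ZMod n → M) :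
    ∑ b ∈ Icc 1 n with Nat.gcd b n = 1 ∧ P b, g b = ∑ x with P x ∧ IsUnit x, g x := by
  refine sum_nbij' (fun b => (b : ZMod n)) val ?_ ?_ ?_ ?_ (fun _ _ => rfl)
  · intro b hb
    simp only [mem_filter, mem_Icc, mem_univ, true_and] at hb ⊢
    exact ⟨hb.2.2, (isUnit_iff_coprime b n).2 hb.2.1⟩
  · intro x hx
    simp only [mem_filter, mem_Icc, mem_univ, true_and] at hx ⊢
    have hcop : x.val.Coprime n := (isUnit_iff_coprime _ n).1 (by rw [natCast_zmod_val]; exact hx.2)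
    have hpos : x.val ≠ 0 := fun h0 => hn (Nat.coprime_zero_left n |>.1 (h0 ▸ hcop))
    exact ⟨⟨Nat.one_le_iff_ne_zero.2 hpos, (val_lt x).le⟩, hcop, by rw [natCast_zmod_val]; exact hx.1⟩
  · intro b hb
    simp only [mem_filter, mem_Icc] at hb
    have hbn : b ≠ n := by rintro rfl; exact hn (by simpa using hb.2.1)
    exact val_cast_of_lt (lt_of_le_of_ne hb.1.2 hbn)
  · intro x _
    exact natCast_zmod_val x

variable {p r : ℕ}

theorem prime_dvd_val_of_not_isUnit [NeZero (p * r)] (hp : p.Prime) {y : ZMod (p * r)}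
    (hy : ¬IsUnit y) (hyr : IsUnit (cast y : ZMod r)) : p ∣ y.val := by
  rw [cast_eq_val, isUnit_iff_coprime] at hyr
  rw [← natCast_zmod_val y, isUnit_iff_coprime] at hy
  by_contra hpy
  exact hy (Nat.Coprime.mul_right (Nat.coprime_comm.1 (hp.coprime_iff_not_dvd.2 hpy)) hyr)

theorem card_filter_cast_eq_not_isUnit_le_one [NeZero (p * r)] (hp : p.Prime) {μ : ZMod r}
    (hμ : IsUnit μ) : #{y : ZMod (p * r) | cast y = μ ∧ ¬IsUnit y} ≤ 1 := by
  rw [card_le_one]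
  intro a ha b hb
  simp only [mem_filter_univ] at ha hb
  have hpa := prime_dvd_val_of_not_isUnit hp ha.2 (ha.1 ▸ hμ)
  have hpb := prime_dvd_val_of_not_isUnit hp hb.2 (hb.1 ▸ hμ)
  have hcop : a.val.Coprime r := by
    rw [← isUnit_iff_coprime, ← cast_eq_val, ha.1]; exact hμ
  have hpr : p.Coprime r := hp.coprime_iff_not_dvd.2 fun hpr =>
    hp.one_lt.ne' (Nat.Coprime.eq_one_of_dvd (Nat.Coprime.coprime_dvd_left hpa hcop) hpr)
  have hmodr : a.val ≡ b.val [MOD r] := by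
    rw [← natCast_eq_natCast_iff, ← cast_eq_val, ← cast_eq_val, ha.1, hb.1]
  have hmodp : a.val ≡ b.val [MOD p] :=
    (Nat.modEq_zero_iff_dvd.2 hpa).trans (Nat.modEq_zero_iff_dvd.2 hpb).symm
  exact val_injective _ (((Nat.modEq_and_modEq_iff_modEq_mul hpr).1 ⟨hmodp, hmodr⟩).eq_of_lt_of_lt
    (val_lt a) (val_lt b))

theorem stdAddChar_intCast_mul_natCast_ne_one [NeZero (p * r)] {l : ℤ} (hl : ¬(p : ℤ) ∣ l) :
    stdAddChar ((l : ZMod (p * r)) * (r : ZMod (p * r))) ≠ 1 := by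
  intro h
  have hr : (r : ℤ) ≠ 0 := by exact_mod_cast right_ne_zero_of_mul (NeZero.ne (p * r))
  have hzero : ((l * r : ℤ) : ZMod (p * r)) = 0 :=
    injective_stdAddChar (by push_cast; rw [h, AddChar.map_zero_eq_one])
  rw [intCast_zmod_eq_zero_iff_dvd] at hzero
  exact hl (Int.dvd_of_mul_dvd_mul_right hr (by exact_mod_cast hzero))

theorem norm_sum_stdAddChar_filter_cast_eq_isUnit_le_one [NeZero (p * r)] (hp : p.Prime)
    {l : ℤ} (hl : ¬(p : ℤ) ∣ l) {μ : ZMod r} (hμ : IsUnit μ) :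
    ‖∑ y : ZMod (p * r) with cast y = μ ∧ IsUnit y, stdAddChar ((l : ZMod (p * r)) * y)‖ ≤ 1 := by
  rw [← filter_filter]
  refine norm_sum_filter_le_one_of_sum_eq_zero ?_ (fun y _ => (AddChar.norm_apply _ _).le) ?_
  · refine (stdAddChar.mulShift (l : ZMod (p * r))).sum_filter_eq_zero_of_periodic
      (fun y => (cast y : ZMod r)) (a := r) (fun y => ?_) (stdAddChar_intCast_mul_natCast_ne_one hl) μ
    rw [cast_add (dvd_mul_left r p), cast_natCast (dvd_mul_left r p), natCast_self, add_zero]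
  · rw [filter_filter]
    exact card_filter_cast_eq_not_isUnit_le_one hp hμ

theorem norm_sum_stdAddChar_inv_le_one [NeZero (p * r)] (hp : p.Prime) {l : ℤ}
    (hl : ¬(p : ℤ) ∣ l) (ν : ZMod r) :
    ‖∑ x : ZMod (p * r) with cast x = ν ∧ IsUnit x, stdAddChar ((l : ZMod (p * r)) * x⁻¹)‖ ≤ 1 := by
  by_cases hν : IsUnit ν
  · rw [sum_filter_isUnit_inv (fun x => (cast x : ZMod r) = ν) (fun y => stdAddChar ((l : ZMod (p * r)) * y))]
    have hfib : ∀ y : ZMod (p * r), (cast y⁻¹ = ν ∧ IsUnit y) ↔ (cast y = ν⁻¹ ∧ IsUnit y) := by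
      intro y
      refine and_congr_left fun hy => ?_
      rw [cast_inv_of_isUnit (dvd_mul_left r p) hy]
      constructor
      · rintro rfl
        exact (inv_inv_of_isUnit (hy.map (castHom (dvd_mul_left r p) (ZMod r)))).symm
      · rintro h
        rw [h, inv_inv_of_isUnit hν]
    rw [filter_congr fun y _ => hfib y]
    exact norm_sum_stdAddChar_filter_cast_eq_isUnit_le_one hp hl (isUnit_inv_of_isUnit hν)
  · have hempty : ∀ x : ZMod (p * r), ¬(cast x = ν ∧ IsUnit x) := fun x hx =>
      hν (hx.1 ▸ hx.2.map (castHom (dvd_mul_left r p) (ZMod r)))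
    rw [filter_false_of_mem fun x _ => hempty x, sum_empty, norm_zero]
    exact zero_le_one

end ZMod

theorem stmt9 (p q : ℕ) (hp : p.Prime) (hq : 0 < q) (hpq : p ∣ q)
    (l : ℤ) (hl : Int.gcd l p = 1) (n : ℤ) :
    ‖∑ b ∈ Finset.filter
        (fun b => Nat.gcd b q = 1 ∧ (b : ℤ) % ((q / p : ℕ) : ℤ) = n % ((q / p : ℕ) : ℤ))
        (Finset.Icc 1 q),
      eC (((l * ((((b : ZMod q))⁻¹.val : ℕ) : ℤ) : ℤ) : ℝ) / q)‖ ≤ 1 := by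
  obtain ⟨r, rfl⟩ := hpq
  have : NeZero (p * r) := ⟨hq.ne'⟩
  have hpl : ¬(p : ℤ) ∣ l := fun h => (Nat.prime_iff_prime_int.1 hp).not_isUnit
    ((Int.isCoprime_iff_gcd_eq_one.2 hl).isUnit_of_dvd' h dvd_rfl)
  have hfib : ∀ b : ℕ, (b : ℤ) % (r : ℤ) = n % r ↔ (ZMod.cast (b : ZMod (p * r)) : ZMod r) = n := by
    intro b
    rw [ZMod.cast_natCast (dvd_mul_left r p), ← ZMod.intCast_eq_intCast_iff', Int.cast_natCast]
  have hq1 : p * r ≠ 1 := fun h => hp.one_lt.ne' (Nat.eq_one_of_mul_eq_one_right h)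
  rw [Nat.mul_div_cancel_left r hp.pos]
  simp_rw [hfib, eC_intCast_mul_val_div_eq_stdAddChar]
  rw [ZMod.sum_Icc_coprime_eq_sum_isUnit hq1 (fun x => (ZMod.cast x : ZMod r) = n)
    (fun x => ZMod.stdAddChar ((l : ZMod (p * r)) * x⁻¹))]
  exact ZMod.norm_sum_stdAddChar_inv_le_one hp hpl (n : ZMod r)
end

section
/- There exists an absolute constant C > 0 such that for all integers k ≥ 1 and m ≥ 0, [(k+m−1)! · (2k−1)!] / [(k−1)! · (2k+m−1)! · m!] ≤ C · (√(k+m) / √(m+1)) · (2k)! / (k! · (k+m)!). -/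
lemma aux_fact (a b : ℕ) (h : a ≤ b) : ∀ j : ℕ,
    Nat.factorial (a + j) * Nat.factorial b ≤ Nat.factorial a * Nat.factorial (b + j) := by
  intro j
  induction j with
  | zero => simp
  | succ n ih =>
    have h1 : a + (n + 1) = (a + n) + 1 := by ring
    have h2 : b + (n + 1) = (b + n) + 1 := by ring
    rw [h1, h2, Nat.factorial_succ, Nat.factorial_succ]
    calc (a + n + 1) * Nat.factorial (a + n) * Nat.factorial b
        = (a + n + 1) * (Nat.factorial (a + n) * Nat.factorial b) := by ring
      _ ≤ (b + n + 1) * (Nat.factorial a * Nat.factorial (b + n)) := by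
          exact Nat.mul_le_mul (by omega) ih
      _ = Nat.factorial a * ((b + n + 1) * Nat.factorial (b + n)) := by ring

lemma key_nat (k m : ℕ) :
    Nat.factorial (k + m) * Nat.factorial (2 * k + 1) *
      (Nat.factorial (k + 1) * Nat.factorial (k + 1 + m)) ≤
    Nat.factorial (2 * k + 2) *
      (Nat.factorial k * Nat.factorial (2 * k + m + 1) * Nat.factorial m) := by
  have h := aux_fact m (k + m) (by omega) (k + 1)
  -- h : (m + (k+1))! * (k+m)! ≤ m! * (k+m+(k+1))!
  have e1 : m + (k + 1) = k + 1 + m := by ring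
  have e2 : k + m + (k + 1) = 2 * k + m + 1 := by ring
  rw [e1, e2] at h
  have f1 : Nat.factorial (k + 1) = (k + 1) * Nat.factorial k := Nat.factorial_succ k
  have f2 : Nat.factorial (2 * k + 2) = (2 * k + 2) * Nat.factorial (2 * k + 1) := by
    have : 2 * k + 2 = (2 * k + 1) + 1 := by ring
    rw [this, Nat.factorial_succ]
  rw [f1, f2]
  calc Nat.factorial (k + m) * Nat.factorial (2 * k + 1) *
        ((k + 1) * Nat.factorial k * Nat.factorial (k + 1 + m))
      = (k + 1) * (Nat.factorial (k + 1 + m) * Nat.factorial (k + m)) *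
          (Nat.factorial (2 * k + 1) * Nat.factorial k) := by ring
    _ ≤ (2 * k + 2) * (Nat.factorial m * Nat.factorial (2 * k + m + 1)) *
          (Nat.factorial (2 * k + 1) * Nat.factorial k) :=
        Nat.mul_le_mul (Nat.mul_le_mul (by omega) h) le_rfl
    _ = (2 * k + 2) * Nat.factorial (2 * k + 1) *
          (Nat.factorial k * Nat.factorial (2 * k + m + 1) * Nat.factorial m) := by ring

theorem stmt14 :
    ∃ C > (0 : ℝ), ∀ (k m : ℕ), 1 ≤ k →
      ((Nat.factorial (k + m - 1) : ℝ) * (Nat.factorial (2 * k - 1) : ℝ)) /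
          ((Nat.factorial (k - 1) : ℝ) * (Nat.factorial (2 * k + m - 1) : ℝ) *
            (Nat.factorial m : ℝ)) ≤
        C * (Real.sqrt ((k : ℝ) + m) / Real.sqrt ((m : ℝ) + 1)) *
          (Nat.factorial (2 * k) : ℝ) /
          ((Nat.factorial k : ℝ) * (Nat.factorial (k + m) : ℝ)) := by
  refine ⟨1, one_pos, ?_⟩
  intro k m hk
  obtain ⟨k', rfl⟩ : ∃ k', k = k' + 1 := ⟨k - 1, by omega⟩
  have e1 : k' + 1 + m - 1 = k' + m := by omega
  have e2 : 2 * (k' + 1) - 1 = 2 * k' + 1 := by omega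
  have e3 : 2 * (k' + 1) + m - 1 = 2 * k' + m + 1 := by omega
  have e4 : 2 * (k' + 1) = 2 * k' + 2 := by omega
  rw [e1, e2, e3, e4]
  set s : ℝ := Real.sqrt ((k' + 1 : ℕ) + m) / Real.sqrt ((m : ℝ) + 1) with hs
  have hs1 : 1 ≤ s := by
    rw [hs]
    rw [le_div_iff₀ (Real.sqrt_pos.mpr (by positivity))]
    rw [one_mul]
    apply Real.sqrt_le_sqrt
    push_cast
    linarith
  have hd1 : (0:ℝ) < (Nat.factorial k' : ℝ) * (Nat.factorial (2 * k' + m + 1) : ℝ) *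
      (Nat.factorial m : ℝ) := by positivity
  have hd2 : (0:ℝ) < (Nat.factorial (k' + 1) : ℝ) * (Nat.factorial (k' + 1 + m) : ℝ) := by
    positivity
  have step1 : ((Nat.factorial (k' + m) : ℝ) * (Nat.factorial (2 * k' + 1) : ℝ)) /
      ((Nat.factorial k' : ℝ) * (Nat.factorial (2 * k' + m + 1) : ℝ) * (Nat.factorial m : ℝ)) ≤
      (Nat.factorial (2 * k' + 2) : ℝ) /
      ((Nat.factorial (k' + 1) : ℝ) * (Nat.factorial (k' + 1 + m) : ℝ)) := by
    rw [div_le_div_iff₀ hd1 hd2]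
    exact_mod_cast key_nat k' m
  have step2 : (Nat.factorial (2 * k' + 2) : ℝ) /
      ((Nat.factorial (k' + 1) : ℝ) * (Nat.factorial (k' + 1 + m) : ℝ)) ≤
      1 * s * (Nat.factorial (2 * k' + 2) : ℝ) /
      ((Nat.factorial (k' + 1) : ℝ) * (Nat.factorial (k' + 1 + m) : ℝ)) := by
    gcongr
    have hp : (0:ℝ) < (Nat.factorial (2 * k' + 2) : ℝ) := by positivity
    nlinarith
  exact step1.trans step2
end

section
/- There exists an absolute constant C > 0 such that for all real numbers t ≥ 1 and k ≥ 2, ∫_{1}^{∞} √r · e^{−πr} / (|r − t| + k)² dr ≤ C · ( 1/(k+t)² + √t · e^{−πt} / k² ). -/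
open MeasureTheory

/- Both factors of the integrand are tamed by one spare factor `e^{-r}` each: `√r e^{-πr} ≤ e^{-2r}`,
and since `k + t ≤ (|r - t| + k)(1 + r/2) ≤ (|r - t| + k) e^{r/2}` the kernel satisfies
`e^{-r} / (|r - t| + k)² ≤ 1 / (k + t)²`. The integrand is thus at most `e^{-r} / (k + t)²`,
whose integral over `[1, ∞)` is `e^{-1} / (k + t)²`, so even `C = 1` works. -/

lemma sqrt_mul_exp_neg_pi_mul_le {r : ℝ} (hr : 0 ≤ r) :
    Real.sqrt r * Real.exp (-Real.pi * r) ≤ Real.exp (-2 * r) := by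
  have hsqrt : Real.sqrt r ≤ Real.exp r := by
    have : Real.sqrt r ≤ r + 1 := by
      nlinarith [Real.sq_sqrt hr, Real.sqrt_nonneg r, sq_nonneg (Real.sqrt r - 1)]
    linarith [Real.add_one_le_exp r]
  calc Real.sqrt r * Real.exp (-Real.pi * r)
      ≤ Real.exp r * Real.exp (-Real.pi * r) := by gcongr
    _ = Real.exp (r + -Real.pi * r) := (Real.exp_add _ _).symm
    _ ≤ Real.exp (-2 * r) := Real.exp_le_exp.mpr (by nlinarith [Real.pi_gt_three])

lemma add_sq_le_sq_abs_sub_add_mul_exp {t k r : ℝ} (ht : 0 ≤ t) (hk : 2 ≤ k) (hr : 0 ≤ r) :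
    (k + t) ^ 2 ≤ (|r - t| + k) ^ 2 * Real.exp r := by
  have hlin : k + t ≤ (|r - t| + k) * (1 + r / 2) := by
    have : t ≤ |r - t| + r := by linarith [le_abs_self (t - r), abs_sub_comm r t]
    nlinarith [abs_nonneg (r - t)]
  have hexp : (1 + r / 2) ^ 2 ≤ Real.exp r := by
    calc (1 + r / 2) ^ 2 ≤ Real.exp (r / 2) ^ 2 := by
          gcongr; linarith [Real.add_one_le_exp (r / 2)]
      _ = Real.exp r := by rw [← Real.exp_nat_mul]; ring_nf
  calc (k + t) ^ 2 ≤ ((|r - t| + k) * (1 + r / 2)) ^ 2 := by gcongr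
    _ = (|r - t| + k) ^ 2 * (1 + r / 2) ^ 2 := by ring
    _ ≤ (|r - t| + k) ^ 2 * Real.exp r := by gcongr

lemma sqrt_mul_exp_neg_pi_mul_div_sq_le {t k r : ℝ} (ht : 0 ≤ t) (hk : 2 ≤ k) (hr : 0 ≤ r) :
    Real.sqrt r * Real.exp (-Real.pi * r) / (|r - t| + k) ^ 2 ≤
      Real.exp (-r) / (k + t) ^ 2 := by
  have hkt : 0 < k + t := by linarith
  have hD : 0 < |r - t| + k := by positivity
  rw [div_le_div_iff₀ (by positivity) (by positivity)]
  calc Real.sqrt r * Real.exp (-Real.pi * r) * (k + t) ^ 2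
      ≤ Real.exp (-2 * r) * ((|r - t| + k) ^ 2 * Real.exp r) := by
        gcongr
        · exact sqrt_mul_exp_neg_pi_mul_le hr
        · exact add_sq_le_sq_abs_sub_add_mul_exp ht hk hr
    _ = Real.exp (-r) * (|r - t| + k) ^ 2 := by
        rw [mul_left_comm, ← Real.exp_add]; ring_nf

lemma setIntegral_Ici_exp_neg (a : ℝ) : ∫ r in Set.Ici a, Real.exp (-r) = Real.exp (-a) := by
  rw [integral_Ici_eq_integral_Ioi, integral_exp_neg_Ioi]

lemma integrableOn_Ici_exp_neg (a : ℝ) : IntegrableOn (fun r : ℝ => Real.exp (-r)) (Set.Ici a) :=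
  (integrableOn_Ici_iff_integrableOn_Ioi).mpr (by simpa using exp_neg_integrableOn_Ioi a one_pos)

theorem stmt17 :
    ∃ C > (0 : ℝ), ∀ t k : ℝ, 1 ≤ t → 2 ≤ k →
      (∫ r in Set.Ici (1 : ℝ), Real.sqrt r * Real.exp (-Real.pi * r) / (|r - t| + k) ^ 2) ≤
        C * (1 / (k + t) ^ 2 + Real.sqrt t * Real.exp (-Real.pi * t) / k ^ 2) := by
  refine ⟨1, one_pos, fun t k ht hk => ?_⟩
  have hmem : ∀ᵐ r ∂volume.restrict (Set.Ici (1 : ℝ)), 1 ≤ r :=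
    ae_restrict_mem measurableSet_Ici
  calc (∫ r in Set.Ici (1 : ℝ), Real.sqrt r * Real.exp (-Real.pi * r) / (|r - t| + k) ^ 2)
      ≤ ∫ r in Set.Ici (1 : ℝ), Real.exp (-r) / (k + t) ^ 2 := by
        refine integral_mono_of_nonneg (ae_of_all _ fun r => by positivity)
          ((integrableOn_Ici_exp_neg 1).div_const _) ?_
        filter_upwards [hmem] with r hr
        exact sqrt_mul_exp_neg_pi_mul_div_sq_le (by linarith) hk (by linarith)
    _ = Real.exp (-1) / (k + t) ^ 2 := by rw [integral_div, setIntegral_Ici_exp_neg]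
    _ ≤ 1 / (k + t) ^ 2 := by gcongr; exact Real.exp_le_one_iff.mpr (by norm_num)
    _ ≤ 1 * (1 / (k + t) ^ 2 + Real.sqrt t * Real.exp (-Real.pi * t) / k ^ 2) := by
        rw [one_mul]; exact le_add_of_nonneg_right (by positivity)
end
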